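/- arXiv:1410.3814 — 3 statements merged into one kernel-verified Lean document; each statement's English description precedes it below -/
import Mathlib

section
/- If G is a primitive subgroup of the symmetric group S_d (acting on a set of d elements) that contains a transposition, then G = S_d. -/
open MulAction

/-- If `G` is a primitive subgroup of the symmetric group `S_d` (acting on `Fin d`,
i.e. the action of `G` on `Fin d` is transitive and every block is trivial)
and `G` contains a transposition, then `G` is all of `S_d`. -/
theorem primitive_subgroup_with_transposition_eq_top
    (d : ℕ) (G : Subgroup (Equiv.Perm (Fin d)))
    (htrans : MulAction.IsPretransitive G (Fin d))
    (hblocks : ∀ B : Set (Fin d), MulAction.IsBlock G B → MulAction.IsTrivialBlock B)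
    (σ : Equiv.Perm (Fin d)) (hswap : σ.IsSwap) (hσ : σ ∈ G) :
    G = ⊤ :=
  Equiv.Perm.subgroup_eq_top_of_isPreprimitive_of_isSwap_mem
    { htrans with isTrivialBlock_of_isBlock := hblocks _ } σ hswap hσ
end

section
/- Let M/K be a finite Galois extension with group G, H ≤ G with fixed field L, and 𝔮 a prime of M over a prime 𝔭 of K. Then the map sending the D(𝔮|𝔭)-orbit of Hτ in G/H to the prime τ(𝔮) ∩ L of L is a well-defined bijection between the orbits of G/H under the decomposition group D(𝔮|𝔭) and the primes of L lying over 𝔭. -/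
/-- **Orbit/prime correspondence.**  In an AKLB setup with `M/K` finite Galois with group `G`,
`H ≤ G` with fixed field `K'` (with ring of integers `C`), `𝔮` a prime of `B` over the prime
`𝔭` of `A`, and `D = D(𝔮|𝔭)` the decomposition group, the map sending the `D`-orbit of the
right coset `Hτ` (under `Hτ ↦ Hτγ`, `γ ∈ D`) to the prime `τ(𝔮) ∩ C` of `C` is a
well-defined bijection between the set of `D`-orbits of `G/H` and the set of primes of `C`
lying over `𝔭`. -/
theorem orbits_of_cosets_biject_with_primes_over
    (A : Type*) [CommRing A] [IsDedekindDomain A]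
    (K : Type*) [Field K] [Algebra A K] [IsFractionRing A K]
    (M : Type*) [Field M] [Algebra K M] [FiniteDimensional K M] [IsGalois K M]
    (B : Type*) [CommRing B] [Algebra A B] [Algebra B M] [Algebra A M]
    [IsScalarTower A B M] [IsScalarTower A K M] [IsIntegralClosure B A M]
    (H : Subgroup (M ≃ₐ[K] M))
    (K' : Type*) [Field K'] [Algebra K K'] [Algebra K' M] [IsScalarTower K K' M]
    (hK' : ∀ σ : M ≃ₐ[K] M,
      σ ∈ H ↔ ∀ x : K', σ (algebraMap K' M x) = algebraMap K' M x)
    (C : Type*) [CommRing C] [Algebra A C] [Algebra C K'] [Algebra A K']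
    [IsScalarTower A C K'] [IsScalarTower A K K'] [IsIntegralClosure C A K']
    [Algebra C B] [Algebra C M] [IsScalarTower C B M] [IsScalarTower C K' M]
    (𝔭 : Ideal A) [𝔭.IsMaximal]
    (𝔮 : Ideal B) [𝔮.IsPrime]
    (hlies : 𝔮.comap (algebraMap A B) = 𝔭) :
    -- the decomposition group `D(𝔮|𝔭)`
    ∀ Dq : Set (M ≃ₐ[K] M),
      Dq = {σ : M ≃ₐ[K] M | Ideal.comap (galRestrict A K M B σ) 𝔮 = 𝔮} →
    -- the map `τ ↦ τ(𝔮) ∩ C`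
    ∀ F : (M ≃ₐ[K] M) → Ideal C,
      F = (fun τ => (Ideal.map (galRestrict A K M B τ) 𝔮).comap (algebraMap C B)) →
    -- it descends to a well-defined injection on `D`-orbits of right cosets of `H` ...
    (∀ τ σ : M ≃ₐ[K] M,
        (∃ γ ∈ Dq, Quotient.mk (QuotientGroup.rightRel H) (τ * γ)
            = Quotient.mk (QuotientGroup.rightRel H) σ)
          ↔ F τ = F σ)
    -- ... whose values are primes of `C` lying over `𝔭` ...
    ∧ (∀ τ : M ≃ₐ[K] M, (F τ).IsPrime ∧ (F τ).comap (algebraMap A C) = 𝔭)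
    -- ... and which hits every prime of `C` lying over `𝔭`
    ∧ (∀ 𝔓 : Ideal C, 𝔓.IsPrime → 𝔓.comap (algebraMap A C) = 𝔭 →
        ∃ τ : M ≃ₐ[K] M, F τ = 𝔓) := by
  intro Dq hDq F hF
  subst hDq hF
  classical
  letI : Fintype (M ≃ₐ[K] M) := AlgEquiv.fintype K M
  letI : Fintype H := Fintype.ofFinite H
  let g : (M ≃ₐ[K] M) ≃* (B ≃ₐ[A] B) := galRestrict A K M B
  have galmul : ∀ σ τ : M ≃ₐ[K] M, g (σ * τ) = g σ * g τ := map_mul g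
  have galone : g 1 = 1 := map_one g
  have galinv : ∀ σ : M ≃ₐ[K] M, g σ⁻¹ = (g σ)⁻¹ := map_inv g
  -- injectivity of the various algebra maps
  have injB : Function.Injective (algebraMap B M) :=
    IsIntegralClosure.algebraMap_injective B A M
  have injCK' : Function.Injective (algebraMap C K') :=
    IsIntegralClosure.algebraMap_injective C A K'
  have injCM : Function.Injective (algebraMap C M) := by
    rw [IsScalarTower.algebraMap_eq C K' M]
    exact (algebraMap K' M).injective.comp injCK'
  have injCB : Function.Injective (algebraMap C B) := by
    have h2 : Function.Injective ((algebraMap B M).comp (algebraMap C B)) := by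
      rw [← IsScalarTower.algebraMap_eq C B M]; exact injCM
    exact fun x y hxy => h2 (by simp [RingHom.comp_apply, hxy])
  -- scalar towers
  letI : IsScalarTower A K' M := IsScalarTower.of_algebraMap_eq (fun a => by
    rw [IsScalarTower.algebraMap_apply A K K', ← IsScalarTower.algebraMap_apply K K' M,
      ← IsScalarTower.algebraMap_apply A K M])
  letI : IsScalarTower A C M := IsScalarTower.of_algebraMap_eq (fun a => by
    rw [IsScalarTower.algebraMap_apply C K' M, ← IsScalarTower.algebraMap_apply A C K',
      ← IsScalarTower.algebraMap_apply A K' M])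
  letI : IsScalarTower A C B := IsScalarTower.of_algebraMap_eq (fun a => by
    apply injB
    rw [← IsScalarTower.algebraMap_apply A B M, ← IsScalarTower.algebraMap_apply C B M,
      ← IsScalarTower.algebraMap_apply A C M])
  -- integrality
  haveI : Algebra.IsIntegral A B := ⟨fun x => IsIntegralClosure.isIntegral A M x⟩
  haveI : Algebra.IsIntegral C B :=
    ⟨fun x => IsIntegral.tower_top (R := A) (Algebra.IsIntegral.isIntegral x)⟩
  -- membership in maps of ideals under automorphisms
  have memmap : ∀ (e : B ≃ₐ[A] B) (I : Ideal B) (x : B),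
      x ∈ I.map e ↔ e.symm x ∈ I := by
    intro e I x
    rw [show I.map e = I.comap ((e : B ≃+* B).symm : B →+* B) from
      Ideal.map_comap_of_equiv (e : B ≃+* B)]
    rfl
  have mulsymm : ∀ (e f : B ≃ₐ[A] B) (x : B), (e * f).symm x = f.symm (e.symm x) :=
    fun e f x => rfl
  have mapmul : ∀ (σ τ : M ≃ₐ[K] M) (I : Ideal B),
      I.map (g (σ * τ)) = (I.map (g τ)).map (g σ) := by
    intro σ τ I
    ext x
    rw [memmap, memmap, memmap, galmul, mulsymm]
  have mapone : ∀ I : Ideal B, I.map (g 1) = I := by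
    intro I
    ext x
    rw [memmap, galone]
    exact Iff.rfl
  -- lying over
  have lieover : ∀ τ : M ≃ₐ[K] M, (𝔮.map (g τ)).comap (algebraMap A B) = 𝔭 := by
    intro τ
    ext a
    rw [Ideal.mem_comap, memmap, AlgEquiv.commutes, ← hlies, Ideal.mem_comap]
  haveI hprime : ∀ τ : M ≃ₐ[K] M, (𝔮.map (g τ)).IsPrime := fun τ => inferInstance
  have hmax : ∀ τ : M ≃ₐ[K] M, (𝔮.map (g τ)).IsMaximal := by
    intro τ
    exact Ideal.isMaximal_of_isIntegral_of_isMaximal_comap _ (by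
      rw [lieover τ]; infer_instance)
  -- automorphisms in `H` fix `C`
  have galfixC : ∀ h ∈ H, ∀ c : C, g h (algebraMap C B c) = algebraMap C B c := by
    intro h hh c
    apply injB
    rw [show algebraMap B M ((g h) (algebraMap C B c))
        = h (algebraMap B M (algebraMap C B c)) from
      algebraMap_galRestrict_apply A h (algebraMap C B c),
      ← IsScalarTower.algebraMap_apply C B M,
      IsScalarTower.algebraMap_apply C K' M, (hK' h).mp hh]
  have comapC_mapH : ∀ h ∈ H, ∀ I : Ideal B,
      (I.map (g h)).comap (algebraMap C B) = I.comap (algebraMap C B) := by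
    intro h hh I
    ext c
    rw [Ideal.mem_comap, Ideal.mem_comap, memmap,
      (g h).symm_apply_eq.mpr (galfixC h hh c).symm]
  -- the fixed field of `H` is the image of `K'`
  have hfixed : IntermediateField.fixedField H = (IsScalarTower.toAlgHom K K' M).fieldRange := by
    rw [show H = (IsScalarTower.toAlgHom K K' M).fieldRange.fixingSubgroup by
      ext s
      rw [IntermediateField.mem_fixingSubgroup_iff, hK']
      constructor
      · rintro hs x ⟨k, rfl⟩
        exact hs k
      · intro hs k
        exact hs _ ⟨k, rfl⟩]
    exact IsGalois.fixedField_fixingSubgroup _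
  -- key: if an element of `B` is fixed by all of `H`, it comes from `C`
  have descend : ∀ y : B, (∀ h ∈ H, g h y = y) → ∃ c : C, algebraMap C B c = y := by
    intro y hy
    have hmem : algebraMap B M y ∈ IntermediateField.fixedField H := by
      intro s
      show (s : M ≃ₐ[K] M) (algebraMap B M y) = algebraMap B M y
      rw [show (s : M ≃ₐ[K] M) (algebraMap B M y) = algebraMap B M (g s y) from
        (algebraMap_galRestrict_apply A (s : M ≃ₐ[K] M) y).symm, hy s s.2]
    rw [hfixed] at hmem
    obtain ⟨k, hk⟩ := hmem
    have hk' : algebraMap K' M k = algebraMap B M y := hk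
    have hint : IsIntegral A k := by
      rw [← isIntegral_algebraMap_iff (algebraMap K' M).injective, hk']
      exact (IsIntegralClosure.isIntegral A M y).algebraMap
    obtain ⟨c, hc⟩ := (IsIntegralClosure.isIntegral_iff (A := C)).mp hint
    refine ⟨c, injB ?_⟩
    rw [← IsScalarTower.algebraMap_apply C B M, IsScalarTower.algebraMap_apply C K' M, hc, hk']
  -- transitivity of `H` on primes of `B` with the same trace in `C`
  have transH : ∀ τ σ : M ≃ₐ[K] M,
      (𝔮.map (g τ)).comap (algebraMap C B) = (𝔮.map (g σ)).comap (algebraMap C B) →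
      ∃ h ∈ H, (𝔮.map (g τ)).map (g h) = 𝔮.map (g σ) := by
    intro τ σ hcomap
    set Q1 := 𝔮.map (g τ) with hQ1
    set Q2 := 𝔮.map (g σ) with hQ2
    have hsub : (Q2 : Set B) ⊆
        ⋃ h ∈ (Finset.univ : Finset H), ((Q1.map (g ↑h) : Ideal B) : Set B) := by
      intro x hx
      have hy : ∀ h0 : H, g ↑h0 (∏ h : H, g ↑h x) = ∏ h : H, g ↑h x := by
        intro h0
        rw [map_prod]
        refine Fintype.prod_equiv (Equiv.mulLeft h0) _ _ (fun h => ?_)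
        show g ↑h0 (g ↑h x) = g ↑(h0 * h) x
        rw [show ((h0 * h : H) : M ≃ₐ[K] M) = (h0 : M ≃ₐ[K] M) * h from rfl, galmul]
        rfl
      obtain ⟨c, hc⟩ := descend (∏ h : H, g ↑h x) (fun h hh => hy ⟨h, hh⟩)
      have hyQ2 : (∏ h : H, g ↑h x) ∈ Q2 := by
        rw [← Finset.prod_erase_mul Finset.univ _ (Finset.mem_univ (1 : H))]
        refine Q2.mul_mem_left _ ?_
        show g ((1 : H) : M ≃ₐ[K] M) x ∈ Q2
        rw [show (((1 : H) : M ≃ₐ[K] M)) = 1 from rfl, galone]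
        exact hx
      have hyQ1 : (∏ h : H, g ↑h x) ∈ Q1 := by
        rw [← hc]
        have : c ∈ Q2.comap (algebraMap C B) := by
          rw [Ideal.mem_comap, hc]; exact hyQ2
        rw [← hcomap] at this
        exact this
      obtain ⟨h, -, hhx⟩ := (Ideal.IsPrime.prod_mem_iff).mp hyQ1
      refine Set.mem_biUnion (Finset.mem_coe.mpr (Finset.mem_univ h⁻¹)) ?_
      show x ∈ Q1.map (g ↑h⁻¹)
      rw [memmap, show ((h⁻¹ : H) : M ≃ₐ[K] M) = ((h : H) : M ≃ₐ[K] M)⁻¹ from rfl,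
        galinv]
      show g ↑h x ∈ Q1
      exact hhx
    have hmaxQ : ∀ h : H, (Q1.map (g ↑h)).IsMaximal := by
      intro h
      have h2 := hmax ((h : M ≃ₐ[K] M) * τ)
      rwa [mapmul] at h2
    obtain ⟨h, -, hle⟩ := (Ideal.subset_union_prime (1 : H) (1 : H)
      (fun i _ _ _ => (hmaxQ i).isPrime)).mp hsub
    refine ⟨h, h.2, ?_⟩
    exact ((hmax σ).eq_of_le (hmaxQ h).ne_top hle).symm
  -- transitivity of the full Galois group on primes of `B` over `𝔭`
  have transG : ∀ Q : Ideal B, Q.IsPrime → Q.comap (algebraMap A B) = 𝔭 →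
      ∃ τ : M ≃ₐ[K] M, 𝔮.map (g τ) = Q := by
    intro Q hQp hQ
    have hsub : (Q : Set B) ⊆
        ⋃ τ ∈ (Finset.univ : Finset (M ≃ₐ[K] M)), ((𝔮.map (g τ) : Ideal B) : Set B) := by
      intro x hx
      have hnorm := prod_galRestrict_eq_norm A K M B x
      have hyQ : (∏ s : M ≃ₐ[K] M, galRestrict A K M B s x) ∈ Q := by
        rw [← Finset.prod_erase_mul Finset.univ _ (Finset.mem_univ (1 : M ≃ₐ[K] M))]
        refine Q.mul_mem_left _ ?_
        show g 1 x ∈ Q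
        rw [galone]
        exact hx
      have hy𝔮 : (∏ s : M ≃ₐ[K] M, galRestrict A K M B s x) ∈ 𝔮 := by
        rw [hnorm] at hyQ
        have ha : _ ∈ Q.comap (algebraMap A B) := Ideal.mem_comap.mpr hyQ
        rw [hQ, ← hlies] at ha
        rw [hnorm]
        exact ha
      obtain ⟨s, -, hsx⟩ := (Ideal.IsPrime.prod_mem_iff).mp hy𝔮
      refine Set.mem_biUnion (Finset.mem_coe.mpr (Finset.mem_univ s⁻¹)) ?_
      show x ∈ 𝔮.map (g s⁻¹)
      rw [memmap, galinv]
      show g s x ∈ 𝔮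
      exact hsx
    obtain ⟨τ, -, hle⟩ := (Ideal.subset_union_prime (1 : M ≃ₐ[K] M) (1 : M ≃ₐ[K] M)
      (fun i _ _ _ => (hmax i).isPrime)).mp hsub
    have hQmax : Q.IsMaximal :=
      Ideal.isMaximal_of_isIntegral_of_isMaximal_comap _ (by rw [hQ]; infer_instance)
    exact ⟨τ, (hQmax.eq_of_le (hmax τ).ne_top hle).symm⟩
  refine ⟨?_, ?_, ?_⟩
  · -- well-definedness and injectivity on orbits
    intro τ σ
    show (∃ γ, (Ideal.comap (g γ) 𝔮 = 𝔮) ∧ _) ↔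
      (𝔮.map (g τ)).comap (algebraMap C B) = (𝔮.map (g σ)).comap (algebraMap C B)
    constructor
    · rintro ⟨γ, hγ, hmk⟩
      have hrel : σ * (τ * γ)⁻¹ ∈ H :=
        QuotientGroup.rightRel_apply.mp (Quotient.exact hmk)
      have hmapγ : 𝔮.map (g γ) = 𝔮 := by
        conv_lhs => rw [← hγ]
        ext x
        rw [memmap, Ideal.mem_comap, (g γ).apply_symm_apply]
      have key : 𝔮.map (g σ) = 𝔮.map (g ((σ * (τ * γ)⁻¹) * (τ * γ))) := by
        rw [show (σ * (τ * γ)⁻¹) * (τ * γ) = σ by group]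
      rw [key, mapmul, mapmul τ γ, hmapγ, comapC_mapH _ hrel]
    · intro hFeq
      obtain ⟨h, hh, hmap⟩ := transH τ σ hFeq
      refine ⟨τ⁻¹ * h⁻¹ * σ, ?_, ?_⟩
      · show Ideal.comap (g (τ⁻¹ * h⁻¹ * σ)) 𝔮 = 𝔮
        have hmap2 : 𝔮.map (g (h * τ)) = 𝔮.map (g σ) := by rw [mapmul]; exact hmap
        have key : 𝔮.map (g (σ⁻¹ * (h * τ))) = 𝔮 := by
          rw [mapmul, hmap2, ← mapmul, inv_mul_cancel, mapone]
        have hcm : Ideal.comap (g (τ⁻¹ * h⁻¹ * σ)) 𝔮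
            = 𝔮.map (g ((τ⁻¹ * h⁻¹ * σ)⁻¹)) := by
          ext x
          rw [Ideal.mem_comap, memmap, galinv]
          exact Iff.rfl
        rw [hcm, show (τ⁻¹ * h⁻¹ * σ)⁻¹ = σ⁻¹ * (h * τ) by group, key]
      · apply Quotient.sound
        apply QuotientGroup.rightRel_apply.mpr
        rw [show σ * (τ * (τ⁻¹ * h⁻¹ * σ))⁻¹ = h by group]
        exact hh
  · -- primality and lying over
    intro τ
    constructor
    · exact Ideal.IsPrime.comap _
    · show ((𝔮.map (g τ)).comap (algebraMap C B)).comap (algebraMap A C) = 𝔭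
      rw [Ideal.comap_comap, ← IsScalarTower.algebraMap_eq A C B, lieover τ]
  · -- surjectivity
    intro 𝔓 h𝔓p h𝔓
    obtain ⟨Q, -, hQp, hQ𝔓⟩ := Ideal.exists_ideal_over_prime_of_isIntegral (R := C) (S := B)
      𝔓 ⊥ (by
        rw [← RingHom.ker_eq_comap_bot, (RingHom.injective_iff_ker_eq_bot _).mp injCB]
        exact bot_le)
    have hQ𝔭 : Q.comap (algebraMap A B) = 𝔭 := by
      rw [IsScalarTower.algebraMap_eq A C B, ← Ideal.comap_comap, hQ𝔓, h𝔓]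
    haveI := hQp
    obtain ⟨τ, hτ⟩ := transG Q hQp hQ𝔭
    refine ⟨τ, ?_⟩
    show (𝔮.map (g τ)).comap (algebraMap C B) = 𝔓
    rw [hτ, hQ𝔓]
end

section
/- Let k be a field of characteristic not dividing d(d−1) (including characteristic 0) and let f(x) = a_d x^d + a₁x + a₀ with a₀a₁a_d ≠ 0. Then f'(x) is separable and the critical points w₁,...,w_{d−1} of f (roots of f') satisfy f(wᵢ) ≠ f(w_j) for i ≠ j. -/
open Polynomial

/-!
At a critical point `w` of `f = a_d X ^ d + a₁ X + a₀` we have `d a_d w ^ (d - 1) = -a₁`, so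
`d f(w) = (d - 1) a₁ w + d a₀`: up to the factor `d`, the critical value is an affine function
of `w` with slope `(d - 1) a₁ ≠ 0`, hence injective. Separability of
`f' = d a_d X ^ (d - 1) + a₁` is that of the binomial `X ^ (d - 1) - c` with `c ≠ 0` and
`d - 1` invertible in `k`.
-/

theorem derivative_trinomial {R : Type*} [CommSemiring R] (a b c : R) (n : ℕ) :
    derivative (C a * X ^ n + C b * X + C c) = C (a * n) * X ^ (n - 1) + C b := by
  rw [derivative_add, derivative_add, derivative_C_mul_X_pow, derivative_C_mul_X, derivative_C,
    add_zero]

theorem separable_C_mul_X_pow_add_C {K : Type*} [Field K] {n : ℕ} {a b : K}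
    (hn : (n : K) ≠ 0) (ha : a ≠ 0) (hb : b ≠ 0) : (C a * X ^ n + C b).Separable := by
  have : C a * X ^ n + C b = C a * (X ^ n - C (-(b / a))) := by
    rw [mul_sub, ← C_mul, mul_neg, mul_div_cancel₀ b ha, C_neg, sub_neg_eq_add]
  rw [this]
  exact (separable_X_pow_sub_C _ hn (neg_ne_zero.mpr (div_ne_zero hb ha))).unit_mul
    (isUnit_C.mpr ha.isUnit)

theorem eval_trinomial_of_isRoot_derivative {R : Type*} [CommRing R] {a b c v : R} {n : ℕ}
    (hn : n ≠ 0) (hv : (derivative (C a * X ^ n + C b * X + C c)).IsRoot v) :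
    n * eval v (C a * X ^ n + C b * X + C c) = ((n - 1 : ℕ) : R) * b * v + n * c := by
  obtain ⟨m, rfl⟩ := Nat.exists_eq_add_one_of_ne_zero hn
  rw [derivative_trinomial, IsRoot, Nat.add_sub_cancel] at hv
  simp only [eval_add, eval_mul, eval_C, eval_pow, eval_X] at hv ⊢
  push_cast at hv ⊢
  linear_combination v * hv

theorem eq_of_isRoot_derivative_trinomial {R : Type*} [CommRing R] [IsDomain R] {a b c v w : R}
    {n : ℕ} (hb : ((n - 1 : ℕ) : R) * b ≠ 0)
    (hv : (derivative (C a * X ^ n + C b * X + C c)).IsRoot v)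
    (hw : (derivative (C a * X ^ n + C b * X + C c)).IsRoot w)
    (h : eval v (C a * X ^ n + C b * X + C c) = eval w (C a * X ^ n + C b * X + C c)) :
    v = w := by
  have hn : n ≠ 0 := by rintro rfl; simp at hb
  have hvw : ((n - 1 : ℕ) : R) * b * (v - w) = 0 := by
    linear_combination eval_trinomial_of_isRoot_derivative hn hw -
      eval_trinomial_of_isRoot_derivative hn hv + (n : R) * h
  exact sub_eq_zero.mp ((mul_eq_zero.mp hvw).resolve_left hb)

/-- Let `k` be a field whose characteristic does not divide `d(d−1)` (including
characteristic `0`) and `f(x) = a_d x^d + a₁ x + a₀` with `a₀a₁a_d ≠ 0`.  Then `f'` is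
separable and the critical points of `f` (the roots of `f'` in an algebraic closure)
have pairwise distinct critical values. -/
theorem trinomial_derivative_separable_and_critical_values_distinct
    (k : Type*) [Field k] (d : ℕ)
    (hchar : ¬ (ringChar k ∣ d * (d - 1)))
    (a_d a₁ a₀ : k) (ha : a_d * a₁ * a₀ ≠ 0)
    (f : Polynomial k) (hf : f = C a_d * X ^ d + C a₁ * X + C a₀) :
    (Polynomial.derivative f).Separable ∧
      ∀ w z : AlgebraicClosure k,
        Polynomial.aeval w (Polynomial.derivative f) = 0 →
        Polynomial.aeval z (Polynomial.derivative f) = 0 →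
        w ≠ z → Polynomial.aeval w f ≠ Polynomial.aeval z f := by
  have hd : (d : k) ≠ 0 := fun h =>
    hchar (((ringChar.spec k d).mp h).mul_right _)
  have hd₁ : ((d - 1 : ℕ) : k) ≠ 0 := fun h =>
    hchar (((ringChar.spec k (d - 1)).mp h).mul_left _)
  have had : a_d ≠ 0 := left_ne_zero_of_mul (left_ne_zero_of_mul ha)
  have ha₁ : a₁ ≠ 0 := right_ne_zero_of_mul (left_ne_zero_of_mul ha)
  refine ⟨?_, fun w z hw hz hwz heq => hwz ?_⟩
  · rw [hf, derivative_trinomial]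
    exact separable_C_mul_X_pow_add_C hd₁ (mul_ne_zero had hd) ha₁
  · set L := AlgebraicClosure k
    have hfL : f.map (algebraMap k L) = C (algebraMap k L a_d) * X ^ d +
        C (algebraMap k L a₁) * X + C (algebraMap k L a₀) := by
      simp [hf]
    rw [← eval_map_algebraMap, ← derivative_map, hfL] at hw hz
    rw [← eval_map_algebraMap, ← eval_map_algebraMap, hfL] at heq
    refine eq_of_isRoot_derivative_trinomial ?_ hw hz heq
    have hmap : algebraMap k L (((d - 1 : ℕ) : k) * a₁) =
        ((d - 1 : ℕ) : L) * algebraMap k L a₁ := by simp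
    exact hmap ▸ (_root_.map_ne_zero _).mpr (mul_ne_zero hd₁ ha₁)
end
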